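/- For every continuous function u : ℝⁿ → ℝ vanishing at infinity and every η ∈ ℝⁿ, one has lim_{t→∞} ∫_{ℝⁿ} ρ̃_t(ξ) u(η − ξ) dξ = u(η). -/

import Mathlib

/-
By the bounds on `q`, `κ₀ t ψ ≤ Q(t,·) ≤ κ₁ t ψ`. The growth bound forces `ψ(0) ≤ 0`,
while `ψ ≥ m > 0` off any ball `B(0,δ)` since `ψ` is positive away from `0` and tends to `∞`.
Choosing a small ball `B(0,r)` on which `κ₁ ψ < κ₀ m / 2`, the mass of `e^{-Q(t,·)}` outside
`B(0,δ)` is `O(e^{-κ₀ m t})`, while its total mass is at least `|B(0,r)| e^{-κ₀ m t / 2}`. So the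
densities `ρ̃_t` concentrate at `0`, i.e. form an approximate identity, and the bounded continuous
function `u(η - ·)` is averaged to its value at `0`.
-/

open MeasureTheory Real Filter Topology

/-- `Q(t,ξ) := ∫₀ᵗ q(τ,ξ) dτ`. -/
noncomputable def Qint {n : ℕ} (q : ℝ → EuclideanSpace ℝ (Fin n) → ℝ)
    (t : ℝ) (ξ : EuclideanSpace ℝ (Fin n)) : ℝ :=
  ∫ τ in (0:ℝ)..t, q τ ξ

/-- The probability density `ρ̃_t(ξ) = e^{-Q(t,ξ)} / ∫ e^{-Q(t,ζ)} dζ`. -/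
noncomputable def rhoDens {n : ℕ} (q : ℝ → EuclideanSpace ℝ (Fin n) → ℝ)
    (t : ℝ) (ξ : EuclideanSpace ℝ (Fin n)) : ℝ :=
  Real.exp (-(Qint q t ξ)) / ∫ ζ, Real.exp (-(Qint q t ζ))

section ApproximateIdentity

variable {α : Type*} [PseudoMetricSpace α] [MeasurableSpace α] [OpensMeasurableSpace α]
  {μ : Measure α} {g : α → ℝ} {x₀ : α} {C : ℝ}

theorem abs_integral_mul_sub_le_of_dist_lt {φ : α → ℝ} {ε δ : ℝ} (hε : 0 ≤ ε)
    (hφ_nonneg : ∀ x, 0 ≤ φ x) (hφ_int : Integrable φ μ) (hφ_one : ∫ x, φ x ∂μ = 1)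
    (hg_meas : AEStronglyMeasurable g μ) (hg_bdd : ∀ x, |g x| ≤ C)
    (hg_near : ∀ x, dist x x₀ < δ → |g x - g x₀| ≤ ε) :
    |∫ x, φ x * g x ∂μ - g x₀| ≤ ε + 2 * C * ∫ x in {x | δ ≤ dist x x₀}, φ x ∂μ := by
  set S := {x | δ ≤ dist x x₀}
  have hS : MeasurableSet S :=
    (isClosed_le continuous_const (continuous_id.dist continuous_const)).measurableSet
  have hφg : Integrable (fun x => φ x * g x) μ := by
    simpa only [mul_comm] using
      hφ_int.bdd_mul hg_meas (.of_forall fun x => (Real.norm_eq_abs _).trans_le (hg_bdd x))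
  have hsplit : ∫ x, φ x * g x ∂μ - g x₀ = ∫ x, φ x * (g x - g x₀) ∂μ := by
    simp only [mul_sub]
    rw [integral_sub hφg (hφ_int.mul_const _), integral_mul_const, hφ_one, one_mul]
  have hpointwise : ∀ x, ‖φ x * (g x - g x₀)‖ ≤ ε * φ x + 2 * C * S.indicator φ x := by
    intro x
    rw [Real.norm_eq_abs, abs_mul, abs_of_nonneg (hφ_nonneg x)]
    by_cases hx : x ∈ S
    · have hg2 : |g x - g x₀| ≤ 2 * C := by
        linarith [abs_sub (g x) (g x₀), hg_bdd x, hg_bdd x₀]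
      rw [Set.indicator_of_mem hx]
      nlinarith [hφ_nonneg x]
    · have hx' : dist x x₀ < δ := lt_of_not_ge hx
      rw [Set.indicator_of_notMem hx, mul_zero, add_zero, mul_comm]
      exact mul_le_mul_of_nonneg_right (hg_near x hx') (hφ_nonneg x)
  calc |∫ x, φ x * g x ∂μ - g x₀|
      ≤ ∫ x, (ε * φ x + 2 * C * S.indicator φ x) ∂μ := by
        rw [hsplit, ← Real.norm_eq_abs]
        exact norm_integral_le_of_norm_le
          ((hφ_int.const_mul _).add ((hφ_int.indicator hS).const_mul _)) (.of_forall hpointwise)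
    _ = ε + 2 * C * ∫ x in S, φ x ∂μ := by
        rw [integral_add (hφ_int.const_mul _) ((hφ_int.indicator hS).const_mul _),
          integral_const_mul, integral_const_mul, hφ_one, mul_one, integral_indicator hS]

theorem tendsto_integral_mul_of_tendsto_setIntegral_dist_ge {ι : Type*} {l : Filter ι}
    {φ : ι → α → ℝ} (hφ_nonneg : ∀ᶠ i in l, ∀ x, 0 ≤ φ i x)
    (hφ_int : ∀ᶠ i in l, Integrable (φ i) μ) (hφ_one : ∀ᶠ i in l, ∫ x, φ i x ∂μ = 1)
    (hφ_conc : ∀ δ > 0, Tendsto (fun i => ∫ x in {x | δ ≤ dist x x₀}, φ i x ∂μ) l (𝓝 0))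
    (hg_meas : AEStronglyMeasurable g μ) (hg_bdd : ∀ x, |g x| ≤ C) (hg_cont : ContinuousAt g x₀) :
    Tendsto (fun i => ∫ x, φ i x * g x ∂μ) l (𝓝 (g x₀)) := by
  rw [Metric.tendsto_nhds]
  intro ε hε
  obtain ⟨δ, hδ, hg_near⟩ := Metric.continuousAt_iff.mp hg_cont (ε / 2) (half_pos hε)
  have htail : ∀ᶠ i in l, 2 * C * ∫ x in {x | δ ≤ dist x x₀}, φ i x ∂μ < ε / 2 := by
    have h := (hφ_conc δ hδ).const_mul (2 * C)
    rw [mul_zero] at h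
    exact h.eventually_lt_const (half_pos hε)
  filter_upwards [hφ_nonneg, hφ_int, hφ_one, htail] with i hi_nonneg hi_int hi_one hi_tail
  rw [Real.dist_eq]
  have := abs_integral_mul_sub_le_of_dist_lt (half_pos hε).le hi_nonneg hi_int hi_one hg_meas
    hg_bdd fun x hx => (Real.dist_eq _ _ ▸ hg_near hx).le
  linarith

end ApproximateIdentity

theorem intervalIntegral_mem_Icc_of_mem_Icc {f : ℝ → ℝ} {a b lo hi : ℝ} (hab : a ≤ b)
    (hf : Measurable f) (h : ∀ τ ∈ Set.Icc a b, f τ ∈ Set.Icc lo hi) :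
    ∫ τ in a..b, f τ ∈ Set.Icc ((b - a) * lo) ((b - a) * hi) := by
  have hf_int : IntervalIntegrable f volume a b := by
    refine (intervalIntegrable_iff_integrableOn_Icc_of_le hab).mpr <|
      Measure.integrableOn_of_bounded (M := max |lo| |hi|) measure_Icc_lt_top.ne
        hf.aestronglyMeasurable ?_
    filter_upwards [ae_restrict_mem measurableSet_Icc] with τ hτ
    exact abs_le_max_abs_abs (h τ hτ).1 (h τ hτ).2
  constructor
  · simpa [smul_eq_mul, mul_comm] using intervalIntegral.integral_mono_on hab
      intervalIntegrable_const hf_int fun τ hτ => (h τ hτ).1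
  · simpa [smul_eq_mul, mul_comm] using intervalIntegral.integral_mono_on hab hf_int
      intervalIntegrable_const fun τ hτ => (h τ hτ).2

theorem IsClosed.exists_pos_le_of_tendsto_cocompact {X : Type*} [TopologicalSpace X]
    {f : X → ℝ} {s : Set X} (hs : IsClosed s) (hf : Continuous f)
    (hf_infty : Tendsto f (cocompact X) atTop) (hpos : ∀ x ∈ s, 0 < f x) :
    ∃ m > 0, ∀ x ∈ s, m ≤ f x := by
  rcases s.eq_empty_or_nonempty with rfl | ⟨x₀, hx₀⟩
  · exact ⟨1, one_pos, by simp⟩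
  obtain ⟨x, hx, hmin⟩ := hf.continuousOn.exists_isMinOn' hs hx₀
    ((hf_infty.eventually (eventually_ge_atTop (f x₀))).filter_mono inf_le_left)
  exact ⟨f x, hpos x hx, fun y hy => hmin hy⟩

section Concentration

variable {α : Type*} [MeasurableSpace α] {μ : Measure α}

theorem integrable_exp_neg_of_le {F G : α → ℝ} (hG : Integrable (fun x => exp (-G x)) μ)
    (hF : AEStronglyMeasurable F μ) (hle : ∀ x, G x ≤ F x) :
    Integrable (fun x => exp (-F x)) μ :=
  hG.mono' (continuous_exp.comp_aestronglyMeasurable hF.neg) <| .of_forall fun x => by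
    rw [Real.norm_eq_abs, abs_of_pos (exp_pos _)]
    exact exp_le_exp.mpr (neg_le_neg (hle x))

variable {ψ : α → ℝ} {Q : ℝ → α → ℝ} {κ₀ : ℝ}

theorem tendsto_setIntegral_exp_neg_div_integral_exp_neg (hκ₀ : 0 < κ₀)
    (hψ_int : ∀ c, 0 < c → Integrable (fun x => exp (-(c * ψ x))) μ)
    (hQ_meas : ∀ t, AEStronglyMeasurable (Q t) μ)
    (hQ_lower : ∀ t, 0 ≤ t → ∀ x, t * (κ₀ * ψ x) ≤ Q t x)
    {S B : Set α} {a b : ℝ} (hS_meas : MeasurableSet S) (hS : ∀ x ∈ S, a ≤ ψ x)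
    (hB_meas : MeasurableSet B) (hB_pos : 0 < μ B) (hB_fin : μ B ≠ ⊤)
    (hQ_upper : ∀ t, 0 ≤ t → ∀ x ∈ B, Q t x ≤ t * b)
    (hba : b < κ₀ * a) :
    Tendsto (fun t => (∫ x in S, exp (-Q t x) ∂μ) / ∫ x, exp (-Q t x) ∂μ) atTop (𝓝 0) := by
  set I := ∫ x, exp (-(κ₀ * ψ x)) ∂μ
  have hB_real : 0 < μ.real B := ENNReal.toReal_pos hB_pos.ne' hB_fin
  have hQ_int : ∀ t, 0 < t → Integrable (fun x => exp (-Q t x)) μ := fun t ht =>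
    integrable_exp_neg_of_le (hψ_int (t * κ₀) (by positivity)) (hQ_meas t)
      fun x => (mul_assoc t κ₀ (ψ x)).trans_le (hQ_lower t ht.le x)
  -- On `S`, `Q t ≥ κ₀ (t - 1) a + κ₀ ψ`.
  have hnum : ∀ t, 1 ≤ t → ∫ x in S, exp (-Q t x) ∂μ ≤ exp (-(κ₀ * a * (t - 1))) * I := by
    intro t ht
    calc ∫ x in S, exp (-Q t x) ∂μ
        ≤ ∫ x in S, exp (-(κ₀ * a * (t - 1))) * exp (-(κ₀ * ψ x)) ∂μ := by
          refine setIntegral_mono_on (hQ_int t (by linarith)).integrableOn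
            ((hψ_int κ₀ hκ₀).const_mul _).integrableOn hS_meas fun x hx => ?_
          rw [← exp_add, exp_le_exp]
          nlinarith [hQ_lower t (by linarith) x,
            mul_nonneg (mul_nonneg hκ₀.le (sub_nonneg.mpr ht)) (sub_nonneg.mpr (hS x hx))]
      _ ≤ ∫ x, exp (-(κ₀ * a * (t - 1))) * exp (-(κ₀ * ψ x)) ∂μ :=
          setIntegral_le_integral ((hψ_int κ₀ hκ₀).const_mul _)
            (.of_forall fun x => by positivity)
      _ = exp (-(κ₀ * a * (t - 1))) * I := integral_const_mul _ _
  have hden : ∀ t, 0 < t → μ.real B * exp (-(t * b)) ≤ ∫ x, exp (-Q t x) ∂μ := by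
    intro t ht
    calc μ.real B * exp (-(t * b)) = ∫ x in B, exp (-(t * b)) ∂μ := by
          rw [setIntegral_const, smul_eq_mul]
      _ ≤ ∫ x in B, exp (-Q t x) ∂μ := by
          refine setIntegral_mono_on (integrableOn_const hB_fin) (hQ_int t ht).integrableOn
            hB_meas fun x hx => ?_
          exact exp_le_exp.mpr (neg_le_neg (hQ_upper t ht.le x hx))
      _ ≤ ∫ x, exp (-Q t x) ∂μ :=
          setIntegral_le_integral (hQ_int t ht) (.of_forall fun x => by positivity)
  have hbound : ∀ t, 1 ≤ t → (∫ x in S, exp (-Q t x) ∂μ) / ∫ x, exp (-Q t x) ∂μ ≤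
      I * exp (κ₀ * a) / μ.real B * exp (-((κ₀ * a - b) * t)) := by
    intro t ht
    calc (∫ x in S, exp (-Q t x) ∂μ) / ∫ x, exp (-Q t x) ∂μ
        ≤ exp (-(κ₀ * a * (t - 1))) * I / (μ.real B * exp (-(t * b))) :=
          div_le_div₀ (by positivity) (hnum t ht) (by positivity) (hden t (by linarith))
      _ = I * exp (κ₀ * a) / μ.real B * exp (-((κ₀ * a - b) * t)) := by
          have hexp : exp (-(κ₀ * a * (t - 1))) =
              exp (κ₀ * a) * exp (-((κ₀ * a - b) * t)) * exp (-(t * b)) := by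
            rw [← exp_add, ← exp_add]; ring_nf
          rw [hexp]
          field_simp
  have hdecay : Tendsto (fun t => I * exp (κ₀ * a) / μ.real B * exp (-((κ₀ * a - b) * t)))
      atTop (𝓝 0) := by
    simpa using (tendsto_exp_neg_atTop_nhds_zero.comp
      (tendsto_id.const_mul_atTop (sub_pos.mpr hba))).const_mul (I * exp (κ₀ * a) / μ.real B)
  refine tendsto_of_tendsto_of_tendsto_of_le_of_le' tendsto_const_nhds hdecay
    (.of_forall fun t => ?_) ((eventually_ge_atTop 1).mono hbound)
  exact div_nonneg (integral_nonneg fun x => (exp_pos _).le)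
    (integral_nonneg fun x => (exp_pos _).le)

end Concentration

theorem tendsto_setIntegral_dist_ge_exp_neg_div_integral_exp_neg {X : Type*} [MetricSpace X]
    [ProperSpace X] [MeasurableSpace X] [OpensMeasurableSpace X] {μ : Measure X}
    [μ.IsOpenPosMeasure] [IsFiniteMeasureOnCompacts μ] {ψ : X → ℝ} {x₀ : X}
    {Q : ℝ → X → ℝ} {κ₀ κ₁ : ℝ} (hκ₀ : 0 < κ₀) (hκ₁ : 0 ≤ κ₁) (hψ_cont : Continuous ψ)
    (hψ_x₀ : ψ x₀ ≤ 0) (hψ_pos : ∀ x, x ≠ x₀ → 0 < ψ x)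
    (hψ_infty : Tendsto ψ (cocompact X) atTop)
    (hψ_int : ∀ c, 0 < c → Integrable (fun x => exp (-(c * ψ x))) μ)
    (hQ_meas : ∀ t, AEStronglyMeasurable (Q t) μ)
    (hQ : ∀ t, 0 ≤ t → ∀ x, Q t x ∈ Set.Icc (t * (κ₀ * ψ x)) (t * (κ₁ * ψ x)))
    {δ : ℝ} (hδ : 0 < δ) :
    Tendsto (fun t => (∫ x in {x | δ ≤ dist x x₀}, exp (-Q t x) ∂μ) / ∫ x, exp (-Q t x) ∂μ)
      atTop (𝓝 0) := by
  have hS_closed : IsClosed {x | δ ≤ dist x x₀} :=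
    isClosed_le continuous_const (continuous_id.dist continuous_const)
  obtain ⟨m, hm, hψ_ge⟩ := hS_closed.exists_pos_le_of_tendsto_cocompact hψ_cont hψ_infty
    fun x hx => hψ_pos x (dist_pos.mp (hδ.trans_le hx))
  have hψ_small : ∀ᶠ x in 𝓝 x₀, κ₁ * ψ x < κ₀ * m / 2 :=
    ((hψ_cont.const_mul κ₁).tendsto x₀).eventually_lt_const
      (by nlinarith [mul_nonpos_of_nonneg_of_nonpos hκ₁ hψ_x₀])
  obtain ⟨r, hr, hr_small⟩ := Metric.eventually_nhds_iff_ball.mp hψ_small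
  refine tendsto_setIntegral_exp_neg_div_integral_exp_neg hκ₀ hψ_int hQ_meas
    (fun t ht x => (hQ t ht x).1) hS_closed.measurableSet hψ_ge Metric.isOpen_ball.measurableSet
    (Metric.measure_ball_pos μ x₀ hr) measure_ball_lt_top.ne
    (fun t ht x hx => (hQ t ht x).2.trans (mul_le_mul_of_nonneg_left (hr_small x hx).le ht))
    (half_lt_self (mul_pos hκ₀ hm))

section Qint

variable {n : ℕ} {q : ℝ → EuclideanSpace ℝ (Fin n) → ℝ}

theorem stronglyMeasurable_Qint
    (hq_meas : Measurable (fun p : ℝ × EuclideanSpace ℝ (Fin n) => q p.1 p.2)) (t : ℝ) :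
    StronglyMeasurable (Qint q t) := by
  have h : StronglyMeasurable fun p : EuclideanSpace ℝ (Fin n) × ℝ => q p.2 p.1 :=
    (hq_meas.comp measurable_swap).stronglyMeasurable
  exact (h.integral_prod_right' (ν := volume.restrict (Set.Ioc 0 t))).sub
    (h.integral_prod_right' (ν := volume.restrict (Set.Ioc t 0)))

theorem Qint_mem_Icc {ψ : EuclideanSpace ℝ (Fin n) → ℝ} {κ₀ κ₁ : ℝ}
    (hq_meas : Measurable (fun p : ℝ × EuclideanSpace ℝ (Fin n) => q p.1 p.2))
    (hq_bound : ∀ τ, 0 ≤ τ → ∀ ξ, κ₀ * ψ ξ ≤ q τ ξ ∧ q τ ξ ≤ κ₁ * ψ ξ)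
    {t : ℝ} (ht : 0 ≤ t) (ξ : EuclideanSpace ℝ (Fin n)) :
    Qint q t ξ ∈ Set.Icc (t * (κ₀ * ψ ξ)) (t * (κ₁ * ψ ξ)) := by
  simpa [Qint] using intervalIntegral_mem_Icc_of_mem_Icc ht
    (hq_meas.comp (measurable_id.prodMk measurable_const)) fun τ hτ => hq_bound τ hτ.1 ξ

theorem rhoDens_nonneg (t : ℝ) (ξ : EuclideanSpace ℝ (Fin n)) : 0 ≤ rhoDens q t ξ :=
  div_nonneg (exp_pos _).le (integral_nonneg fun _ => (exp_pos _).le)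

variable {t : ℝ} (h : Integrable fun ξ => exp (-Qint q t ξ))
include h

theorem integrable_rhoDens : Integrable (rhoDens q t) := h.div_const _

theorem integral_rhoDens : ∫ ξ, rhoDens q t ξ = 1 := by
  simp only [rhoDens, integral_div]
  exact div_self (integral_exp_pos h).ne'

end Qint

theorem stmt5_general {n : ℕ}
    (ψ : EuclideanSpace ℝ (Fin n) → ℝ) (hψ_cont : Continuous ψ)
    (hψ_pos : ∀ ξ, ξ ≠ 0 → 0 < ψ ξ)
    (hψ_infty : Tendsto ψ (cocompact (EuclideanSpace ℝ (Fin n))) atTop)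
    (hψ_growth : ∀ ε : ℝ, 0 < ε → ∃ Cε : ℝ, 0 ≤ Cε ∧ ∀ ξ, ψ ξ ≤ Cε * ‖ξ‖ ^ 2 + ε)
    (hψ_int : ∀ c : ℝ, 0 < c → Integrable (fun ξ => Real.exp (-(c * ψ ξ))))
    (q : ℝ → EuclideanSpace ℝ (Fin n) → ℝ)
    (hq_meas : Measurable (fun p : ℝ × EuclideanSpace ℝ (Fin n) => q p.1 p.2))
    (κ₀ κ₁ : ℝ) (hκ₀ : 0 < κ₀) (hκ : κ₀ ≤ κ₁)
    (hq_bound : ∀ τ, 0 ≤ τ → ∀ ξ, κ₀ * ψ ξ ≤ q τ ξ ∧ q τ ξ ≤ κ₁ * ψ ξ)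
    (u : EuclideanSpace ℝ (Fin n) → ℝ) (hu_cont : Continuous u)
    (hu_zero : Tendsto u (cocompact (EuclideanSpace ℝ (Fin n))) (𝓝 0))
    (η : EuclideanSpace ℝ (Fin n)) :
    Tendsto (fun t => ∫ ξ, rhoDens q t ξ * u (η - ξ)) atTop (𝓝 (u η)) := by
  have hψ0 : ψ 0 ≤ 0 := le_of_forall_pos_le_add fun ε hε => by
    obtain ⟨C, -, hC⟩ := hψ_growth ε hε
    simpa using hC 0
  have hQ (t : ℝ) (ht : 0 ≤ t) := Qint_mem_Icc hq_meas hq_bound ht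
  have hQ_int : ∀ᶠ t in atTop, Integrable fun ξ => exp (-Qint q t ξ) :=
    (eventually_gt_atTop 0).mono fun t ht =>
      integrable_exp_neg_of_le (hψ_int (t * κ₀) (by positivity))
        (stronglyMeasurable_Qint hq_meas t).aestronglyMeasurable
        fun ξ => (mul_assoc t κ₀ (ψ ξ)).trans_le (hQ t ht.le ξ).1
  obtain ⟨C, hC⟩ : ∃ C, ∀ ξ, |u ξ| ≤ C :=
    ⟨_, (ZeroAtInftyContinuousMap.toBCF ⟨⟨u, hu_cont⟩, hu_zero⟩).norm_coe_le_norm⟩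
  have hconc (δ : ℝ) (hδ : 0 < δ) :
      Tendsto (fun t => ∫ ξ in {ξ | δ ≤ dist ξ 0}, rhoDens q t ξ) atTop (𝓝 0) := by
    simpa only [rhoDens, integral_div] using
      tendsto_setIntegral_dist_ge_exp_neg_div_integral_exp_neg hκ₀ (hκ₀.le.trans hκ) hψ_cont
        hψ0 hψ_pos hψ_infty hψ_int
        (fun t => (stronglyMeasurable_Qint hq_meas t).aestronglyMeasurable)
        hQ hδ
  simpa using tendsto_integral_mul_of_tendsto_setIntegral_dist_ge (x₀ := 0)
    (.of_forall fun t => rhoDens_nonneg t) (hQ_int.mono fun t => integrable_rhoDens)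
    (hQ_int.mono fun t => integral_rhoDens) hconc
    (hu_cont.comp (continuous_const.sub continuous_id)).aestronglyMeasurable (fun ξ => hC (η - ξ))
    (hu_cont.comp (continuous_const.sub continuous_id)).continuousAt

theorem stmt5 {n : ℕ} (hn : 1 ≤ n)
    (ψ : EuclideanSpace ℝ (Fin n) → ℝ) (hψ_cont : Continuous ψ)
    (hψ_pos : ∀ ξ, ξ ≠ 0 → 0 < ψ ξ)
    (hψ_infty : Tendsto ψ (cocompact (EuclideanSpace ℝ (Fin n))) atTop)
    (hψ_growth : ∀ ε : ℝ, 0 < ε → ∃ Cε : ℝ, 0 ≤ Cε ∧ ∀ ξ, ψ ξ ≤ Cε * ‖ξ‖ ^ 2 + ε)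
    (hψ_int : ∀ c : ℝ, 0 < c → Integrable (fun ξ => Real.exp (-(c * ψ ξ))))
    (q : ℝ → EuclideanSpace ℝ (Fin n) → ℝ)
    (hq_meas : Measurable (fun p : ℝ × EuclideanSpace ℝ (Fin n) => q p.1 p.2))
    (κ₀ κ₁ : ℝ) (hκ₀ : 0 < κ₀) (hκ : κ₀ ≤ κ₁)
    (hq_bound : ∀ τ, 0 ≤ τ → ∀ ξ, κ₀ * ψ ξ ≤ q τ ξ ∧ q τ ξ ≤ κ₁ * ψ ξ)
    (u : EuclideanSpace ℝ (Fin n) → ℝ) (hu_cont : Continuous u)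
    (hu_zero : Tendsto u (cocompact (EuclideanSpace ℝ (Fin n))) (𝓝 0))
    (η : EuclideanSpace ℝ (Fin n)) :
    Tendsto (fun t => ∫ ξ, rhoDens q t ξ * u (η - ξ)) atTop (𝓝 (u η)) :=
  stmt5_general ψ hψ_cont hψ_pos hψ_infty hψ_growth hψ_int q hq_meas κ₀ κ₁ hκ₀ hκ hq_bound u hu_cont
    hu_zero η
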